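/- arXiv:2311.17105 — 2 statements merged into one kernel-verified Lean document; each statement's English description precedes it below -/
import Mathlib

section
/- The expected OKS E_{p~N(μ,σ²I)}[exp(−‖p̂ − p‖²/(2l²))] as a function of p̂ is maximized at p̂ = μ, with maximum value l²/(σ² + l²) = 1 − σ²/(σ² + l²). -/
/-!
Completing the square, the product of the Gaussian density of `N(μ, σ²I)` with the OKS kernel
around `p̂` is a Gaussian in `p` times `exp (-‖μ - p̂‖² / (2 (σ² + l²)))`. Integrating out `p`
gives the expected OKS in closed form, `l² / (σ² + l²) * exp (-‖μ - p̂‖² / (2 (σ² + l²)))`,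
which is largest exactly when the exponent vanishes, i.e. at `p̂ = μ`.
-/

open MeasureTheory Real

section CompleteSquare

variable {V : Type*} [NormedAddCommGroup V] [InnerProductSpace ℝ V]

theorem mul_norm_sub_sq_add_mul_norm_sub_sq {a b : ℝ} (hab : a + b ≠ 0) (x y p : V) :
    a * ‖p - x‖ ^ 2 + b * ‖p - y‖ ^ 2 =
      (a + b) * ‖p - (a + b)⁻¹ • (a • x + b • y)‖ ^ 2 + a * b / (a + b) * ‖x - y‖ ^ 2 := by
  simp only [norm_sub_sq_real, norm_smul, norm_add_sq_real, inner_smul_left, inner_smul_right,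
    inner_add_right, RCLike.conj_to_real, mul_pow, Real.norm_eq_abs, sq_abs]
  field_simp
  ring

variable [FiniteDimensional ℝ V] [MeasurableSpace V] [BorelSpace V]

theorem integral_exp_neg_mul_norm_sub_sq_add_mul_norm_sub_sq {a b : ℝ} (ha : 0 < a) (hb : 0 < b)
    (x y : V) :
    ∫ p : V, rexp (-(a * ‖p - x‖ ^ 2 + b * ‖p - y‖ ^ 2)) =
      (π / (a + b)) ^ (Module.finrank ℝ V / 2 : ℝ) * rexp (-(a * b / (a + b) * ‖x - y‖ ^ 2)) := by
  have hab : 0 < a + b := add_pos ha hb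
  simp_rw [mul_norm_sub_sq_add_mul_norm_sub_sq hab.ne', neg_add, Real.exp_add]
  rw [integral_mul_const, integral_sub_right_eq_self (fun p : V ↦ rexp (-((a + b) * ‖p‖ ^ 2))),
    ← GaussianFourier.integral_rexp_neg_mul_sq_norm hab]
  simp_rw [neg_mul]

end CompleteSquare

noncomputable def expectedOKS (μ : EuclideanSpace ℝ (Fin 2)) (σ l : ℝ)
    (phat : EuclideanSpace ℝ (Fin 2)) : ℝ :=
  ∫ p : EuclideanSpace ℝ (Fin 2),
    (1 / (2 * π * σ ^ 2)) * Real.exp (-‖p - μ‖ ^ 2 / (2 * σ ^ 2)) *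
      Real.exp (-‖phat - p‖ ^ 2 / (2 * l ^ 2))

theorem expectedOKS_eq_mul_exp (μ phat : EuclideanSpace ℝ (Fin 2)) {σ l : ℝ} (hσ : σ ≠ 0)
    (hl : l ≠ 0) :
    expectedOKS μ σ l phat =
      l ^ 2 / (σ ^ 2 + l ^ 2) * rexp (-‖μ - phat‖ ^ 2 / (2 * (σ ^ 2 + l ^ 2))) := by
  have hexp (p : EuclideanSpace ℝ (Fin 2)) :
      rexp (-‖p - μ‖ ^ 2 / (2 * σ ^ 2)) * rexp (-‖phat - p‖ ^ 2 / (2 * l ^ 2)) =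
        rexp (-((2 * σ ^ 2)⁻¹ * ‖p - μ‖ ^ 2 + (2 * l ^ 2)⁻¹ * ‖p - phat‖ ^ 2)) := by
    rw [← Real.exp_add, norm_sub_rev phat p]
    ring_nf
  simp_rw [expectedOKS, mul_assoc, hexp]
  rw [integral_const_mul, integral_exp_neg_mul_norm_sub_sq_add_mul_norm_sub_sq (by positivity)
    (by positivity), finrank_euclideanSpace_fin]
  have hsl : σ ^ 2 + l ^ 2 ≠ 0 := by positivity
  rw [Nat.cast_ofNat, div_self two_ne_zero, rpow_one, ← mul_assoc]
  congr 1
  · field_simp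
    ring
  · congr 1
    field_simp
    ring

theorem expectedOKS_self (μ : EuclideanSpace ℝ (Fin 2)) {σ l : ℝ} (hσ : σ ≠ 0) (hl : l ≠ 0) :
    expectedOKS μ σ l μ = l ^ 2 / (σ ^ 2 + l ^ 2) := by
  simp [expectedOKS_eq_mul_exp μ μ hσ hl]

theorem expectedOKS_le_self (μ phat : EuclideanSpace ℝ (Fin 2)) {σ l : ℝ} (hσ : σ ≠ 0)
    (hl : l ≠ 0) : expectedOKS μ σ l phat ≤ expectedOKS μ σ l μ := by
  rw [expectedOKS_eq_mul_exp μ phat hσ hl, expectedOKS_self μ hσ hl]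
  refine mul_le_of_le_one_right (by positivity) (exp_le_one_iff.mpr ?_)
  exact div_nonpos_of_nonpos_of_nonneg (neg_nonpos.mpr (by positivity)) (by positivity)

/-- The expected OKS as a function of the prediction is maximized at the mean,
with maximum value `l²/(σ² + l²) = 1 - σ²/(σ² + l²)`. -/
theorem expected_oks_maximized_at_mean (μ : EuclideanSpace ℝ (Fin 2)) (σ l : ℝ)
    (hσ : 0 < σ) (hl : 0 < l) :
    (∀ phat : EuclideanSpace ℝ (Fin 2),
        (∫ p : EuclideanSpace ℝ (Fin 2),
            (1 / (2 * π * σ ^ 2)) * Real.exp (-‖p - μ‖ ^ 2 / (2 * σ ^ 2)) *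
              Real.exp (-‖phat - p‖ ^ 2 / (2 * l ^ 2))) ≤
          (∫ p : EuclideanSpace ℝ (Fin 2),
            (1 / (2 * π * σ ^ 2)) * Real.exp (-‖p - μ‖ ^ 2 / (2 * σ ^ 2)) *
              Real.exp (-‖μ - p‖ ^ 2 / (2 * l ^ 2)))) ∧
    (∫ p : EuclideanSpace ℝ (Fin 2),
        (1 / (2 * π * σ ^ 2)) * Real.exp (-‖p - μ‖ ^ 2 / (2 * σ ^ 2)) *
          Real.exp (-‖μ - p‖ ^ 2 / (2 * l ^ 2))) = l ^ 2 / (σ ^ 2 + l ^ 2) ∧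
    l ^ 2 / (σ ^ 2 + l ^ 2) = 1 - σ ^ 2 / (σ ^ 2 + l ^ 2) := by
  have hsl : σ ^ 2 + l ^ 2 ≠ 0 := by positivity
  refine ⟨fun phat ↦ expectedOKS_le_self μ phat hσ.ne' hl.ne', expectedOKS_self μ hσ.ne' hl.ne', ?_⟩
  rw [one_sub_div hsl, add_sub_cancel_left]
end

section
/- Optimal heatmap is a widened Gaussian: if the ground-truth heatmap value at pixel m is h_m(p) = exp(−‖m − p‖²/(2l̃²)) with p ~ N(μ, σ²I), then the pointwise MSE-optimal prediction is ĥ(m) = E_p[h_m(p)] = (l̃²/(σ² + l̃²)) · exp(−‖m − μ‖²/(2(σ² + l̃²))), i.e. a Gaussian bump with effective variance σ² + l̃² and peak value l̃²/(σ² + l̃²) attained at m = μ. -/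
/-!
Completing the square, the product of the two Gaussian factors is a Gaussian in `p` with
precision `1/σ² + 1/l̃²`, centred between `μ` and `m`, times `exp (-‖m - μ‖² / (2 (σ² + l̃²)))`.
In dimension `d` the former integrates to `(2π σ² l̃² / (σ² + l̃²)) ^ (d/2)`; for `d = 2` this
cancels against the normalisation `1 / (2π σ²)` down to `l̃² / (σ² + l̃²)`.
-/

open MeasureTheory Real

section

variable {V : Type*} [NormedAddCommGroup V] [InnerProductSpace ℝ V]

theorem norm_sq_div_add_norm_sub_sq_div {s v : ℝ} (hs : s ≠ 0) (hv : v ≠ 0) (hsv : s + v ≠ 0)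
    (x y : V) :
    ‖x‖ ^ 2 / s + ‖y - x‖ ^ 2 / v =
      (s + v) / (s * v) * ‖x - (s / (s + v)) • y‖ ^ 2 + ‖y‖ ^ 2 / (s + v) := by
  rw [norm_sub_sq_real, norm_sub_sq_real, norm_smul, inner_smul_right, real_inner_comm,
    mul_pow, Real.norm_eq_abs, sq_abs]
  field_simp
  ring

variable [FiniteDimensional ℝ V] [MeasurableSpace V] [BorelSpace V]

theorem integral_exp_neg_norm_sub_sq_mul_exp_neg_norm_sub_sq {s v : ℝ} (hs : 0 < s) (hv : 0 < v)
    (μ m : V) :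
    ∫ p : V, exp (-‖p - μ‖ ^ 2 / (2 * s)) * exp (-‖m - p‖ ^ 2 / (2 * v)) =
      (2 * π * (s * v / (s + v))) ^ (Module.finrank ℝ V / 2 : ℝ) *
        exp (-‖m - μ‖ ^ 2 / (2 * (s + v))) := by
  set y := m - μ
  have hA : 0 < (s + v) / (2 * (s * v)) := by positivity
  have hcomplete : ∀ x : V, exp (-‖x‖ ^ 2 / (2 * s)) * exp (-‖y - x‖ ^ 2 / (2 * v)) =
      exp (-((s + v) / (2 * (s * v))) * ‖x - (s / (s + v)) • y‖ ^ 2) *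
        exp (-‖y‖ ^ 2 / (2 * (s + v))) := by
    intro x
    have h := norm_sq_div_add_norm_sub_sq_div hs.ne' hv.ne' (by positivity : s + v ≠ 0) x y
    rw [← exp_add, ← exp_add]
    congr 1
    calc -‖x‖ ^ 2 / (2 * s) + -‖y - x‖ ^ 2 / (2 * v)
        = -(‖x‖ ^ 2 / s + ‖y - x‖ ^ 2 / v) / 2 := by ring
      _ = _ := by rw [h]; field_simp; ring
  calc ∫ p : V, exp (-‖p - μ‖ ^ 2 / (2 * s)) * exp (-‖m - p‖ ^ 2 / (2 * v))
      = ∫ x : V, exp (-‖x‖ ^ 2 / (2 * s)) * exp (-‖y - x‖ ^ 2 / (2 * v)) := by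
        rw [← integral_add_right_eq_self _ μ]
        simp_rw [add_sub_cancel_right, y, sub_add_eq_sub_sub_swap]
    _ = (∫ x : V, exp (-((s + v) / (2 * (s * v))) * ‖x‖ ^ 2)) *
          exp (-‖y‖ ^ 2 / (2 * (s + v))) := by
        simp_rw [hcomplete, integral_mul_const,
          integral_sub_right_eq_self (fun x : V => exp (-((s + v) / (2 * (s * v))) * ‖x‖ ^ 2))]
    _ = _ := by
        rw [GaussianFourier.integral_rexp_neg_mul_sq_norm hA]
        congr 2
        field_simp

end

/-- The MSE-optimal heatmap is a widened Gaussian with effective variance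
`σ² + l̃²` peaking at `μ` with value `l̃²/(σ² + l̃²)`. -/
theorem optimal_heatmap_widened_gaussian (μ : EuclideanSpace ℝ (Fin 2))
    (σ ltil : ℝ) (hσ : 0 < σ) (hl : 0 < ltil) :
    (∀ m : EuclideanSpace ℝ (Fin 2),
        (∫ p : EuclideanSpace ℝ (Fin 2),
            (1 / (2 * π * σ ^ 2)) * Real.exp (-‖p - μ‖ ^ 2 / (2 * σ ^ 2)) *
              Real.exp (-‖m - p‖ ^ 2 / (2 * ltil ^ 2))) =
          (ltil ^ 2 / (σ ^ 2 + ltil ^ 2)) *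
            Real.exp (-‖m - μ‖ ^ 2 / (2 * (σ ^ 2 + ltil ^ 2)))) ∧
    (∀ m : EuclideanSpace ℝ (Fin 2),
        (ltil ^ 2 / (σ ^ 2 + ltil ^ 2)) *
            Real.exp (-‖m - μ‖ ^ 2 / (2 * (σ ^ 2 + ltil ^ 2))) ≤
          ltil ^ 2 / (σ ^ 2 + ltil ^ 2)) ∧
    (ltil ^ 2 / (σ ^ 2 + ltil ^ 2)) *
        Real.exp (-‖μ - μ‖ ^ 2 / (2 * (σ ^ 2 + ltil ^ 2))) =
      ltil ^ 2 / (σ ^ 2 + ltil ^ 2) := by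
  refine ⟨fun m => ?_, fun m => ?_, by simp⟩
  · simp_rw [mul_assoc, integral_const_mul,
      integral_exp_neg_norm_sub_sq_mul_exp_neg_norm_sub_sq (pow_pos hσ 2) (pow_pos hl 2),
      finrank_euclideanSpace_fin, ← mul_assoc]
    norm_num
    field_simp
  · have hpeak : 0 ≤ ltil ^ 2 / (σ ^ 2 + ltil ^ 2) := by positivity
    refine mul_le_of_le_one_right hpeak (exp_le_one_iff.mpr ?_)
    exact div_nonpos_of_nonpos_of_nonneg (neg_nonpos.mpr (sq_nonneg _)) (by positivity)
end
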